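/- Let x ∈ ∂J*(−A*y), x̄ ∈ ∂J*(−A*ȳ), Ax̄ = f, and v = Au − f^δ with −sA*v ∈ ∂J(u). For s > 0 and any η ∈ (0,1], one has D^{−A*ȳ}(u, x̄) + D^{−sA*v}(x̄, u) + (1−η)s‖Au − f‖² ≤ (1/(4ηs))(‖ȳ‖ + sδ)², provided ‖f^δ − f‖ ≤ δ. -/

import Mathlib

open Set MeasureTheory

noncomputable section

notation "⟪" x ", " y "⟫" => @inner ℝ _ _ x y

/-- `u` is a subgradient of the convex function `J` at `x`. -/
def HasSubgrad {p : ℕ} (J : EuclideanSpace ℝ (Fin p) → ℝ) (u x : EuclideanSpace ℝ (Fin p)) :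
    Prop :=
  ∀ z, J x + ⟪u, z - x⟫ ≤ J z

/-- Bregman divergence `D^u(x₁,x₂) = J(x₁) - J(x₂) - ⟨u, x₁ - x₂⟩` (for `u ∈ ∂J(x₂)`). -/
def Breg {p : ℕ} (J : EuclideanSpace ℝ (Fin p) → ℝ) (u x₁ x₂ : EuclideanSpace ℝ (Fin p)) : ℝ :=
  J x₁ - J x₂ - ⟪u, x₁ - x₂⟫

/-! The symmetric Bregman distance `D^a(x₁, x₂) + D^b(x₂, x₁) = ⟨b - a, x₁ - x₂⟩` does not involve
`J` at all, so after pulling `A` through the inner product the estimate reduces to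
`⟨ȳ + s(f^δ - f), w⟩ - ηs‖w‖² ≤ (‖ȳ‖ + sδ)²/(4ηs)` for `w = Au - f`, which is Cauchy–Schwarz
followed by Young's inequality `ct - kt² ≤ c²/(4k)`. -/

theorem breg_add_breg_swap {p : ℕ} (J : EuclideanSpace ℝ (Fin p) → ℝ)
    (a b x₁ x₂ : EuclideanSpace ℝ (Fin p)) :
    Breg J a x₁ x₂ + Breg J b x₂ x₁ = ⟪b - a, x₁ - x₂⟫ := by
  rw [Breg, Breg, inner_sub_left, ← neg_sub x₁ x₂, inner_neg_right]
  ring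

theorem breg_add_breg_swap_neg_adjoint {p d : ℕ}
    (A : EuclideanSpace ℝ (Fin p) →L[ℝ] EuclideanSpace ℝ (Fin d))
    (J : EuclideanSpace ℝ (Fin p) → ℝ) (y z : EuclideanSpace ℝ (Fin d))
    (x₁ x₂ : EuclideanSpace ℝ (Fin p)) :
    Breg J (-(ContinuousLinearMap.adjoint A y)) x₁ x₂ +
        Breg J (-(ContinuousLinearMap.adjoint A z)) x₂ x₁ = ⟪y - z, A x₁ - A x₂⟫ := by
  rw [breg_add_breg_swap, neg_sub_neg, ← map_sub, ContinuousLinearMap.adjoint_inner_left, map_sub]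

theorem mul_sub_mul_sq_le_sq_div {c k : ℝ} (hk : 0 < k) (t : ℝ) :
    c * t - k * t ^ 2 ≤ c ^ 2 / (4 * k) := by
  rw [le_div_iff₀ (by positivity)]
  nlinarith [sq_nonneg (c - 2 * k * t)]

theorem tikhonov_key_estimate_general {p d : ℕ}
    (A : EuclideanSpace ℝ (Fin p) →L[ℝ] EuclideanSpace ℝ (Fin d))
    (J : EuclideanSpace ℝ (Fin p) → ℝ)
    (f fδ : EuclideanSpace ℝ (Fin d)) (δ : ℝ) (hnoise : ‖fδ - f‖ ≤ δ)
    (xb u : EuclideanSpace ℝ (Fin p)) (yb v : EuclideanSpace ℝ (Fin d))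
    (hfeas : A xb = f)
    (s η : ℝ) (hs : 0 < s) (hη : η ∈ Set.Ioc (0:ℝ) 1)
    (hv : v = A u - fδ) :
    Breg J (-(ContinuousLinearMap.adjoint A yb)) u xb +
        Breg J (-(s • ContinuousLinearMap.adjoint A v)) xb u +
        (1 - η) * s * ‖A u - f‖ ^ 2 ≤
      1 / (4 * η * s) * (‖yb‖ + s * δ) ^ 2 := by
  have hηs : 0 < η * s := mul_pos hη.1 hs
  set w := A u - f
  set g := yb + s • (fδ - f)
  have hdual : yb - s • v = g - s • w := by simp only [hv, g, w]; module
  have hg : ‖g‖ ≤ ‖yb‖ + s * δ := calc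
    ‖g‖ ≤ ‖yb‖ + s * ‖fδ - f‖ := by
      simpa [g, norm_smul, abs_of_pos hs] using norm_add_le yb (s • (fδ - f))
    _ ≤ ‖yb‖ + s * δ := by gcongr
  rw [← ContinuousLinearMap.map_smul, breg_add_breg_swap_neg_adjoint, hfeas, hdual]
  calc ⟪g - s • w, w⟫ + (1 - η) * s * ‖w‖ ^ 2 = ⟪g, w⟫ - η * s * ‖w‖ ^ 2 := by
        rw [inner_sub_left, real_inner_smul_left, real_inner_self_eq_norm_sq]; ring
    _ ≤ (‖yb‖ + s * δ) * ‖w‖ - η * s * ‖w‖ ^ 2 := by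
        gcongr
        exact (real_inner_le_norm g w).trans (by gcongr)
    _ ≤ (‖yb‖ + s * δ) ^ 2 / (4 * (η * s)) := mul_sub_mul_sq_le_sq_div hηs _
    _ = 1 / (4 * η * s) * (‖yb‖ + s * δ) ^ 2 := by ring

/-- Key Tikhonov estimate: if `-A*ȳ ∈ ∂J(x̄)`, `Ax̄ = f`, `v = Au - f^δ` with
`-sA*v ∈ ∂J(u)`, `‖f^δ - f‖ ≤ δ`, then for any `s > 0` and `η ∈ (0,1]`,
`D^{-A*ȳ}(u, x̄) + D^{-sA*v}(x̄, u) + (1-η)s‖Au - f‖² ≤ (1/(4ηs))(‖ȳ‖ + sδ)²`. -/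
theorem tikhonov_key_estimate {p d : ℕ}
    (A : EuclideanSpace ℝ (Fin p) →L[ℝ] EuclideanSpace ℝ (Fin d))
    (J : EuclideanSpace ℝ (Fin p) → ℝ) (hJ : ConvexOn ℝ Set.univ J)
    (f fδ : EuclideanSpace ℝ (Fin d)) (δ : ℝ) (hnoise : ‖fδ - f‖ ≤ δ)
    (x xb u : EuclideanSpace ℝ (Fin p)) (y yb v : EuclideanSpace ℝ (Fin d))
    (hx : HasSubgrad J (-(ContinuousLinearMap.adjoint A y)) x)
    (hxb : HasSubgrad J (-(ContinuousLinearMap.adjoint A yb)) xb)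
    (hfeas : A xb = f)
    (s η : ℝ) (hs : 0 < s) (hη : η ∈ Set.Ioc (0:ℝ) 1)
    (hv : v = A u - fδ)
    (hu : HasSubgrad J (-(s • ContinuousLinearMap.adjoint A v)) u) :
    Breg J (-(ContinuousLinearMap.adjoint A yb)) u xb +
        Breg J (-(s • ContinuousLinearMap.adjoint A v)) xb u +
        (1 - η) * s * ‖A u - f‖ ^ 2 ≤
      1 / (4 * η * s) * (‖yb‖ + s * δ) ^ 2 :=
  tikhonov_key_estimate_general A J f fδ δ hnoise xb u yb v hfeas s η hs hη hv
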